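/- arXiv:1701.04034 — 2 statements merged into one kernel-verified Lean document; each statement's English description precedes it below -/
import Mathlib

section
/- Let A = k[x,y] and 𝔮 = (x,y). Let α, β ∈ A be units in the localization A_𝔮, let L₂(y) ∈ k[y], L₃(y) ∈ y·k[y], and Q(x) ∈ k[x]. Then in the localization A_𝔮 one has the ideal equality (x² − α·y·(x·L₂(y) + L₃(y)), y − β·x²·Q(x))·A_𝔮 = (x², y)·A_𝔮. -/
/-!
Write `f = x² − y·c` and `g = y − x²·d` with `c = α(x·L₂ + L₃)` and `d = β·Q`. Then
`f + c·g = (1 − c·d)·x²`, and `1 − c·d` is a unit in `A_𝔮` because `c ∈ 𝔮`.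
Hence `x²`, and then `y = g + d·x²`, lie in `(f, g)·A_𝔮`.
-/

open MvPolynomial

theorem Ideal.span_pair_sub_mul_eq {R : Type*} [CommRing R] {a b c d : R}
    (h : IsUnit (1 - c * d)) :
    Ideal.span {a - b * c, b - a * d} = Ideal.span {a, b} := by
  apply le_antisymm
  · rw [Ideal.span_le, Set.insert_subset_iff, Set.singleton_subset_iff]
    exact ⟨Ideal.mem_span_pair.2 ⟨1, -c, by ring⟩, Ideal.mem_span_pair.2 ⟨-d, 1, by ring⟩⟩
  · obtain ⟨u, hu⟩ := h
    have ha : a ∈ Ideal.span {a - b * c, b - a * d} :=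
      Ideal.mem_span_pair.2 ⟨↑u⁻¹, c * ↑u⁻¹, by
        linear_combination a * u.inv_mul - a * ↑u⁻¹ * hu⟩
    have hb : b ∈ Ideal.span {a - b * c, b - a * d} :=
      Ideal.mem_span_pair.2 ⟨d * ↑u⁻¹, d * c * ↑u⁻¹ + 1, by
        linear_combination a * d * u.inv_mul - a * d * ↑u⁻¹ * hu⟩
    rw [Ideal.span_le, Set.insert_subset_iff, Set.singleton_subset_iff]
    exact ⟨ha, hb⟩

theorem IsLocalization.AtPrime.isUnit_algebraMap_one_sub {R : Type*} [CommRing R] (q : Ideal R)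
    [q.IsPrime] {c : R} (hc : c ∈ q) :
    IsUnit (algebraMap R (Localization.AtPrime q) (1 - c)) := by
  refine (IsLocalization.AtPrime.isUnit_to_map_iff _ q _).2 fun h ↦ ?_
  exact Ideal.IsPrime.ne_top ‹_› <| (Ideal.eq_top_iff_one q).2 (by simpa using add_mem h hc)

theorem stmt14_general {K : Type*} [Field K]
    (q : Ideal (MvPolynomial (Fin 2) K))
    (hq : q = Ideal.span {(X 0 : MvPolynomial (Fin 2) K), X 1})
    [q.IsPrime]
    (α β L₂ L₃ Q : MvPolynomial (Fin 2) K)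
    (hL₃ : ∃ p : Polynomial K, L₃ = X 1 * Polynomial.aeval (X 1 : MvPolynomial (Fin 2) K) p) :
    (Ideal.span {X 0 ^ 2 - α * X 1 * (X 0 * L₂ + L₃), X 1 - β * X 0 ^ 2 * Q}).map
        (algebraMap (MvPolynomial (Fin 2) K) (Localization.AtPrime q)) =
      (Ideal.span {(X 0 : MvPolynomial (Fin 2) K) ^ 2, X 1}).map
        (algebraMap (MvPolynomial (Fin 2) K) (Localization.AtPrime q)) := by
  obtain ⟨p, rfl⟩ := hL₃
  have hx : (X 0 : MvPolynomial (Fin 2) K) ∈ q := hq ▸ Ideal.subset_span (by simp)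
  have hy : (X 1 : MvPolynomial (Fin 2) K) ∈ q := hq ▸ Ideal.subset_span (by simp)
  have hM : X 0 * L₂ + X 1 * Polynomial.aeval (X 1) p ∈ q :=
    add_mem (q.mul_mem_right _ hx) (q.mul_mem_right _ hy)
  have hu := IsLocalization.AtPrime.isUnit_algebraMap_one_sub q
    (q.mul_mem_right (β * Q) (q.mul_mem_left α hM))
  set φ := algebraMap (MvPolynomial (Fin 2) K) (Localization.AtPrime q)
  rw [map_sub, map_one, map_mul] at hu
  rw [Ideal.map_span, Ideal.map_span, Set.image_pair, Set.image_pair,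
    ← Ideal.span_pair_sub_mul_eq (a := φ (X 0 ^ 2)) (b := φ (X 1)) hu]
  congr 3 <;> simp only [map_sub, map_mul, map_add, map_pow] <;> ring

/-- In `A = k[x,y]` localized at `𝔮 = (x,y)`: if `α, β` are local units, `L₂ ∈ k[y]`,
`L₃ ∈ y·k[y]` and `Q ∈ k[x]`, then
`(x² − α·y·(x·L₂ + L₃), y − β·x²·Q) A_𝔮 = (x², y) A_𝔮`.
Here `x = X 0` and `y = X 1`. -/
theorem stmt14 {K : Type*} [Field K]
    (q : Ideal (MvPolynomial (Fin 2) K))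
    (hq : q = Ideal.span {(X 0 : MvPolynomial (Fin 2) K), X 1})
    [q.IsPrime]
    (α β L₂ L₃ Q : MvPolynomial (Fin 2) K)
    (hα : IsUnit (algebraMap (MvPolynomial (Fin 2) K) (Localization.AtPrime q) α))
    (hβ : IsUnit (algebraMap (MvPolynomial (Fin 2) K) (Localization.AtPrime q) β))
    (hL₂ : ∃ p : Polynomial K, L₂ = Polynomial.aeval (X 1 : MvPolynomial (Fin 2) K) p)
    (hL₃ : ∃ p : Polynomial K, L₃ = X 1 * Polynomial.aeval (X 1 : MvPolynomial (Fin 2) K) p)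
    (hQ : ∃ p : Polynomial K, Q = Polynomial.aeval (X 0 : MvPolynomial (Fin 2) K) p) :
    (Ideal.span {X 0 ^ 2 - α * X 1 * (X 0 * L₂ + L₃), X 1 - β * X 0 ^ 2 * Q}).map
        (algebraMap (MvPolynomial (Fin 2) K) (Localization.AtPrime q)) =
      (Ideal.span {(X 0 : MvPolynomial (Fin 2) K) ^ 2, X 1}).map
        (algebraMap (MvPolynomial (Fin 2) K) (Localization.AtPrime q)) :=
  stmt14_general q hq α β L₂ L₃ Q hL₃
end

section
/- Let F(x,y) = y² − x^k + y·g(x,y) + h(x,y) ∈ k[x,y], where k ≥ 3 is an integer, g is homogeneous of degree k−1, and h has order (initial degree) at least k+1. Then the gradient ideal J(F) = (∂F/∂x, ∂F/∂y), localized at the maximal ideal 𝔮 = (x,y), satisfies J(F)·k[x,y]_𝔮 = (x^{k−1}, y)·k[x,y]_𝔮; in particular J(F)·k[x,y]_𝔮 is a complete intersection and F ∈ J(F)·k[x,y]_𝔮. -/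
/-!
Write `x = X 0`, `y = X 1` and `n = k - 1`. Below degree `k` the polynomial `F` agrees with
`y²`, so none of `F`, `∂F/∂x`, `∂F/∂y` contains a monomial `xʲ` with `j < n`, and all three lie
in `(xⁿ, y)`. Writing `∂F/∂x = w xⁿ + t y` and `∂F/∂y = v xⁿ + u y`, the constant terms are
`w(0) = -k`, `t(0) = 0` and `u(0) = 2`, so the determinant `wu - tv` has constant term
`-2k ≠ 0` and is a unit at the origin. Cramer's rule then gives `J(F)_𝔮 = (xⁿ, y)_𝔮`, and
`[xⁿ, y]` is a regular sequence because `x` is prime and does not divide `y`.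
-/

open MvPolynomial

noncomputable def gradIdeal {σ : Type*} {K : Type*} [CommRing K] (f : MvPolynomial σ K) :
    Ideal (MvPolynomial σ K) :=
  Ideal.span (Set.range fun i => pderiv i f)

theorem gradIdeal_eq_span_pair {R : Type*} [CommRing R] (f : MvPolynomial (Fin 2) R) :
    gradIdeal f = Ideal.span {pderiv 0 f, pderiv 1 f} := by
  rw [gradIdeal]
  congr 1
  ext
  simp [Fin.exists_fin_two, eq_comm]

theorem Ideal.span_pair_eq_of_isUnit_det {S : Type*} [CommRing S] {a b w t v u : S}
    (hD : IsUnit (w * u - t * v)) :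
    Ideal.span {w * a + t * b, v * a + u * b} = Ideal.span {a, b} := by
  set I := Ideal.span {w * a + t * b, v * a + u * b}
  have hf₁ : w * a + t * b ∈ I := Ideal.subset_span (by simp)
  have hf₂ : v * a + u * b ∈ I := Ideal.subset_span (by simp)
  refine le_antisymm (Ideal.span_le.mpr ?_) (Ideal.span_le.mpr ?_)
  · rintro _ (rfl | rfl) <;> exact Ideal.mem_span_pair.mpr ⟨_, _, rfl⟩
  · rintro _ (rfl | rfl)
    · rw [SetLike.mem_coe, ← Ideal.mul_unit_mem_iff_mem I hD]
      convert sub_mem (I.mul_mem_left u hf₁) (I.mul_mem_left t hf₂) using 1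
      ring
    · rw [SetLike.mem_coe, ← Ideal.mul_unit_mem_iff_mem I hD]
      convert sub_mem (I.mul_mem_left w hf₂) (I.mul_mem_left v hf₁) using 1
      ring

theorem RingTheory.Sequence.isWeaklyRegular_pow_pair {S : Type*} [CommRing S] [IsDomain S]
    {c b : S} (hc : Prime c) (hb : ¬ c ∣ b) (e : ℕ) : IsWeaklyRegular S [c ^ e, b] := by
  refine (isWeaklyRegular_cons_iff S _ _).mpr
    ⟨IsSMulRegular.of_ne_zero (pow_ne_zero _ hc.ne_zero), ?_⟩
  rw [isWeaklyRegular_singleton_iff, isSMulRegular_quotient_iff_mem_of_smul_mem]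
  intro z hz
  rw [← Submodule.ideal_span_singleton_smul, smul_eq_mul, Ideal.mul_top,
    Ideal.mem_span_singleton] at hz ⊢
  exact hc.pow_dvd_of_dvd_mul_left e hb hz

namespace MvPolynomial

variable {R : Type*} [CommRing R]

theorem mem_span_X_zero_pow_X_one {n : ℕ} {p : MvPolynomial (Fin 2) R}
    (hp : ∀ j < n, coeff (Finsupp.single 0 j) p = 0) : p ∈ Ideal.span {X 0 ^ n, X 1} := by
  have hgen : ({X 0 ^ n, X 1} : Set (MvPolynomial (Fin 2) R)) =
      (fun s => monomial s (1 : R)) '' {Finsupp.single 0 n, Finsupp.single 1 1} := by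
    rw [Set.image_pair, X_pow_eq_monomial]
    rfl
  rw [hgen, mem_ideal_span_monomial_image]
  intro m hm
  by_cases hm1 : m 1 = 0
  · refine ⟨Finsupp.single 0 n, by simp, Finsupp.single_le_iff.mpr ?_⟩
    have hm_eq : m = Finsupp.single 0 (m 0) := by
      ext i
      fin_cases i <;> simp [hm1]
    by_contra! hlt
    exact mem_support_iff.mp hm (hm_eq ▸ hp _ hlt)
  · exact ⟨Finsupp.single 1 1, by simp, Finsupp.single_le_iff.mpr (by omega)⟩

theorem exists_eq_mul_X_zero_pow_add_mul_X_one {n : ℕ} (hn : 0 < n) {p : MvPolynomial (Fin 2) R}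
    (hp : ∀ j < n, coeff (Finsupp.single 0 j) p = 0) :
    ∃ w t, w * X 0 ^ n + t * X 1 = p ∧ constantCoeff w = coeff (Finsupp.single 0 n) p ∧
      constantCoeff t = coeff (Finsupp.single 1 1) p := by
  classical
  obtain ⟨w, t, rfl⟩ := Ideal.mem_span_pair.mp (mem_span_X_zero_pow_X_one hp)
  refine ⟨w, t, rfl, ?_⟩
  simp [X_pow_eq_monomial, coeff_mul_monomial', coeff_mul_X', constantCoeff_eq, hn.ne']

variable {k : ℕ} {F : MvPolynomial (Fin 2) R}

theorem coeff_eq_coeff_X_one_sq_of_lt {g h : MvPolynomial (Fin 2) R}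
    (hg : g.IsHomogeneous (k - 1))
    (hh : ∀ m : Fin 2 →₀ ℕ, m 0 + m 1 < k + 1 → coeff m h = 0)
    (hF : F = X 1 ^ 2 - X 0 ^ k + X 1 * g + h) {m : Fin 2 →₀ ℕ} (hm : m 0 + m 1 < k) :
    coeff m F = coeff m (X 1 ^ 2) := by
  classical
  have hXg : coeff m (X 1 * g) = 0 := by
    rw [coeff_X_mul']
    split_ifs with hm1
    · refine hg.coeff_eq_zero ?_
      rw [Finsupp.degree_eq_sum, Fin.sum_univ_two]
      simp at hm1 ⊢
      omega
    · rfl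
  have hXk : coeff m (X 0 ^ k : MvPolynomial (Fin 2) R) = 0 := by
    rw [coeff_X_pow, if_neg]
    rintro rfl
    simp at hm
  rw [hF, coeff_add, coeff_add, coeff_sub, hXg, hXk, hh m (by omega)]
  ring

theorem coeff_single_zero_eq_neg_one {g h : MvPolynomial (Fin 2) R}
    (hh : ∀ m : Fin 2 →₀ ℕ, m 0 + m 1 < k + 1 → coeff m h = 0)
    (hF : F = X 1 ^ 2 - X 0 ^ k + X 1 * g + h) :
    coeff (Finsupp.single 0 k) F = -1 := by
  classical
  rw [hF, coeff_add, coeff_add, coeff_sub, hh _ (by simp)]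
  simp [coeff_X_pow, coeff_X_mul', Finsupp.single_eq_single_iff]

theorem exists_pderiv_zero_eq (hk : 3 ≤ k)
    (hlow : ∀ m : Fin 2 →₀ ℕ, m 0 + m 1 < k → coeff m F = coeff m (X 1 ^ 2))
    (htop : coeff (Finsupp.single 0 k) F = -1) :
    ∃ w t, w * X 0 ^ (k - 1) + t * X 1 = pderiv 0 F ∧ constantCoeff w = -(k : R) ∧
      constantCoeff t = 0 := by
  classical
  obtain ⟨w, t, hwt, hw, ht⟩ := exists_eq_mul_X_zero_pow_add_mul_X_one (p := pderiv 0 F)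
    (n := k - 1) (by omega) fun j hj => by
      rw [coeff_pderiv, ← Finsupp.single_add, hlow _ (by simp; omega)]
      simp [coeff_X_pow, Finsupp.ext_iff, Fin.forall_fin_two]
  refine ⟨w, t, hwt, ?_, ?_⟩
  · rw [hw, coeff_pderiv, ← Finsupp.single_add, Nat.sub_add_cancel (by omega), htop]
    simp [Nat.cast_sub (show 1 ≤ k by omega)]
  · rw [ht, coeff_pderiv, hlow _ (by simp; omega)]
    simp [coeff_X_pow, Finsupp.ext_iff, Fin.forall_fin_two]

theorem exists_pderiv_one_eq (hk : 3 ≤ k)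
    (hlow : ∀ m : Fin 2 →₀ ℕ, m 0 + m 1 < k → coeff m F = coeff m (X 1 ^ 2)) :
    ∃ v u, v * X 0 ^ (k - 1) + u * X 1 = pderiv 1 F ∧ constantCoeff u = 2 := by
  classical
  obtain ⟨v, u, hvu, -, hu⟩ := exists_eq_mul_X_zero_pow_add_mul_X_one (p := pderiv 1 F)
    (n := k - 1) (by omega) fun j hj => by
      rw [coeff_pderiv, hlow _ (by simp; omega)]
      simp [coeff_X_pow, Finsupp.ext_iff, Fin.forall_fin_two]
  refine ⟨v, u, hvu, ?_⟩
  rw [hu, coeff_pderiv, ← Finsupp.single_add, hlow _ (by simp; omega)]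
  norm_num [coeff_X_pow]

theorem mem_span_X_zero_pow_pred_X_one
    (hlow : ∀ m : Fin 2 →₀ ℕ, m 0 + m 1 < k → coeff m F = coeff m (X 1 ^ 2)) :
    F ∈ Ideal.span {X 0 ^ (k - 1), X 1} :=
  mem_span_X_zero_pow_X_one fun j hj => by
    rw [hlow _ (by simp; omega)]
    simp [coeff_X_pow, Finsupp.ext_iff, Fin.forall_fin_two]

end MvPolynomial

theorem stmt15_general {K : Type*} [Field K] [CharZero K] (k : ℕ) (hk : 3 ≤ k)
    (g h F : MvPolynomial (Fin 2) K)
    (hg : g.IsHomogeneous (k - 1))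
    (hh : ∀ m : Fin 2 →₀ ℕ, m 0 + m 1 < k + 1 → coeff m h = 0)
    (hF : F = X 1 ^ 2 - X 0 ^ k + X 1 * g + h)
    (q : Ideal (MvPolynomial (Fin 2) K))
    (hq : q = Ideal.span {(X 0 : MvPolynomial (Fin 2) K), X 1})
    [q.IsPrime] :
    (gradIdeal F).map (algebraMap (MvPolynomial (Fin 2) K) (Localization.AtPrime q)) =
      (Ideal.span {(X 0 : MvPolynomial (Fin 2) K) ^ (k - 1), X 1}).map
        (algebraMap (MvPolynomial (Fin 2) K) (Localization.AtPrime q)) ∧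
    (∃ rs : List (Localization.AtPrime q), rs.length = 2 ∧
        RingTheory.Sequence.IsRegular (Localization.AtPrime q) rs ∧
        Ideal.span {x | x ∈ rs} =
          (gradIdeal F).map (algebraMap (MvPolynomial (Fin 2) K) (Localization.AtPrime q))) ∧
    algebraMap (MvPolynomial (Fin 2) K) (Localization.AtPrime q) F ∈
      (gradIdeal F).map (algebraMap (MvPolynomial (Fin 2) K) (Localization.AtPrime q)) := by
  set φ := algebraMap (MvPolynomial (Fin 2) K) (Localization.AtPrime q)
  have hlow := fun m => coeff_eq_coeff_X_one_sq_of_lt (m := m) hg hh hF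
  obtain ⟨w, t, hFx, hw, ht⟩ :=
    exists_pderiv_zero_eq hk hlow (coeff_single_zero_eq_neg_one hh hF)
  obtain ⟨v, u, hFy, hu⟩ := exists_pderiv_one_eq hk hlow
  have hx : X 0 ∈ q := hq ▸ Ideal.subset_span (by simp)
  have hy : X 1 ∈ q := hq ▸ Ideal.subset_span (by simp)
  have hq_le : q ≤ RingHom.ker constantCoeff :=
    hq ▸ Ideal.span_le.mpr (by simp [Set.insert_subset_iff])
  have hdet : w * u - t * v ∉ q := fun hmem => by
    have h0 := hq_le hmem
    rw [RingHom.mem_ker, map_sub, map_mul, map_mul, hw, ht, hu] at h0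
    norm_num at h0
    omega
  have hJ : (gradIdeal F).map φ = (Ideal.span {X 0 ^ (k - 1), X 1}).map φ := by
    rw [gradIdeal_eq_span_pair, ← hFx, ← hFy, Ideal.map_span, Ideal.map_span, Set.image_pair,
      Set.image_pair]
    simp only [map_add, map_mul]
    refine Ideal.span_pair_eq_of_isUnit_det ?_
    simpa using IsLocalization.map_units (Localization.AtPrime q) (⟨_, hdet⟩ : q.primeCompl)
  have hxn : X 0 ^ (k - 1) ∈ q := q.pow_mem_of_mem hx (k - 1) (by omega)
  refine ⟨hJ, ⟨[φ (X 0 ^ (k - 1)), φ (X 1)], rfl, ?_, ?_⟩, ?_⟩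
  · exact (RingTheory.Sequence.isWeaklyRegular_pow_pair X_prime (by simp) (k - 1)
      |>.isRegular_of_isLocalization_of_mem _ q (by simp [hxn, hy]))
  · rw [hJ, Ideal.map_span, Set.image_pair]
    congr 1
    ext
    simp
  · rw [hJ]
    exact Ideal.mem_map_of_mem _ (mem_span_X_zero_pow_pred_X_one hlow)

/-- For `F = y² − x^k + y·g(x,y) + h(x,y)` with `k ≥ 3`, `g` homogeneous of degree `k − 1`
and `ord h ≥ k + 1`, the gradient ideal localized at the origin `𝔮 = (x,y)` equals
`(x^{k−1}, y)`; in particular it is a complete intersection and `F ∈ J(F)_𝔮`.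
Here `x = X 0` and `y = X 1`. -/
theorem stmt15 {K : Type*} [Field K] [IsAlgClosed K] [CharZero K] (k : ℕ) (hk : 3 ≤ k)
    (g h F : MvPolynomial (Fin 2) K)
    (hg : g.IsHomogeneous (k - 1))
    (hh : ∀ m : Fin 2 →₀ ℕ, m 0 + m 1 < k + 1 → coeff m h = 0)
    (hF : F = X 1 ^ 2 - X 0 ^ k + X 1 * g + h)
    (q : Ideal (MvPolynomial (Fin 2) K))
    (hq : q = Ideal.span {(X 0 : MvPolynomial (Fin 2) K), X 1})
    [q.IsPrime] :
    (gradIdeal F).map (algebraMap (MvPolynomial (Fin 2) K) (Localization.AtPrime q)) =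
      (Ideal.span {(X 0 : MvPolynomial (Fin 2) K) ^ (k - 1), X 1}).map
        (algebraMap (MvPolynomial (Fin 2) K) (Localization.AtPrime q)) ∧
    (∃ rs : List (Localization.AtPrime q), rs.length = 2 ∧
        RingTheory.Sequence.IsRegular (Localization.AtPrime q) rs ∧
        Ideal.span {x | x ∈ rs} =
          (gradIdeal F).map (algebraMap (MvPolynomial (Fin 2) K) (Localization.AtPrime q))) ∧
    algebraMap (MvPolynomial (Fin 2) K) (Localization.AtPrime q) F ∈
      (gradIdeal F).map (algebraMap (MvPolynomial (Fin 2) K) (Localization.AtPrime q)) :=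
  stmt15_general k hk g h F hg hh hF q hq
end
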